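/- For any tree T with at least three vertices and any positive integer t, the radius of the generalized Sierpiński graph S(T,t) satisfies: r(S(T,t)) = (1/2)·(3·2^t − 2t − 3)·D(T) − 2·(2^t − t − 1) if D(T) is even, and r(S(T,t)) = (1/2)·( (3·2^t − 2t − 3)·D(T) − 2^{t+2} + 4t + 5 ) if D(T) is odd, where D(T) is the diameter of T. -/

import Mathlib

/-!
`S(T,t)` is again a tree, so its radius is `⌈diam / 2⌉`: the midpoint of a diametral path lies
on a shortest path from every vertex to one of the two ends.

The diameter comes from the recursive structure. `S(T,t+1)` consists of the copies `x S(T,t)`,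
each isometric to `S(T,t)`, joined by the bridges `x y^t ~ y x^t` for the edges `xy` of `T`.
A shortest path between words with first letters `x ≠ z` therefore runs through the copies along
the `x`–`z` path of `T`, entering and leaving each inner copy at corners. This gives
`d(x^t, y^t) = (2^t - 1) d(x, y)` and bounds distances from corners by eccentricities in `T`.
Inner vertices of a path in a tree have eccentricity `< D`, which yields
`diam S(T,t) ≤ (3·2^t − 2t − 3) D − 4 (2^t − t − 1)`, with equality for the words `abab…`
and `baba…` built from a diametral pair `a, b` of `T`.
-/

/-- The generalized Sierpiński graph `S(G,t)` of a base graph `G`: vertices are words of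
length `t` over the vertex set (encoded as `Fin t → V`); two words are adjacent iff they are
of the form `w x y^{d-1}` and `w y x^{d-1}` for some edge `{x,y}` of `G`. -/
def SierpinskiGraph {V : Type*} (G : SimpleGraph V) (t : ℕ) : SimpleGraph (Fin t → V) where
  Adj u v := ∃ i : Fin t, G.Adj (u i) (v i) ∧
      (∀ j : Fin t, j < i → u j = v j) ∧
      (∀ j : Fin t, i < j → u j = v i ∧ v j = u i)
  symm := by
    constructor
    rintro u v ⟨i, h1, h2, h3⟩
    exact ⟨i, h1.symm, fun j hj => (h2 j hj).symm, fun j hj => ⟨(h3 j hj).2, (h3 j hj).1⟩⟩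
  loopless := by
    constructor
    rintro u ⟨i, h1, -, -⟩
    exact G.loopless.irrefl _ h1

/-- Eccentricity of a vertex: the maximum distance to any other vertex. -/
noncomputable def eccent {V : Type*} (G : SimpleGraph V) (v : V) : ℕ := ⨆ u, G.dist v u

/-- Diameter: maximum eccentricity. -/
noncomputable def graphDiam {V : Type*} (G : SimpleGraph V) : ℕ := ⨆ v, eccent G v

/-- Radius: minimum eccentricity. -/
noncomputable def graphRadius {V : Type*} (G : SimpleGraph V) : ℕ := ⨅ v, eccent G v

namespace SimpleGraph

variable {V W : Type*} {G : SimpleGraph V} {H : SimpleGraph W} {a b c p q q' u v w x y z z' : V}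

lemma Walk.exists_adj_cross {P : V → Prop} (γ : G.Walk u v) (hu : P u) (hv : ¬ P v) :
    ∃ a b, G.Adj a b ∧ P a ∧ ¬ P b ∧ ∃ (γ₁ : G.Walk u a) (γ₂ : G.Walk b v),
      γ₁.length + 1 + γ₂.length = γ.length := by
  induction γ with
  | nil => exact absurd hu hv
  | @cons u' x' v' h γ ih =>
    by_cases hx : P x'
    · obtain ⟨a, b, hab, ha, hb, γ₁, γ₂, hl⟩ := ih hx hv
      exact ⟨a, b, hab, ha, hb, .cons h γ₁, γ₂, by simp only [Walk.length_cons]; omega⟩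
    · refine ⟨u', x', h, hu, hx, .nil, γ, ?_⟩
      simp only [Walk.length_nil, Walk.length_cons]
      omega

theorem Connected.dist_eq_add_of_cut (hG : G.Connected) {P : V → Prop} (hpq : G.Adj p q)
    (hcut : ∀ a b, G.Adj a b → P a → ¬ P b → a = p ∧ b = q) (hu : P u) (hv : ¬ P v) :
    G.dist u v = G.dist u p + 1 + G.dist q v := by
  refine le_antisymm ?_ ?_
  · have := hG.dist_triangle (u := u) (v := p) (w := v)
    have := hG.dist_triangle (u := p) (v := q) (w := v)
    rw [dist_eq_one_iff_adj.mpr hpq] at this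
    omega
  · obtain ⟨γ, hγ⟩ := hG.exists_walk_length_eq_dist u v
    obtain ⟨a, b, hab, ha, hb, γ₁, γ₂, hl⟩ := γ.exists_adj_cross hu hv
    obtain ⟨rfl, rfl⟩ := hcut a b hab ha hb
    have := dist_le γ₁
    have := dist_le γ₂
    omega

lemma Walk.exists_length_le_of_adj_or_eq (f : V → W)
    (hf : ∀ a b, G.Adj a b → H.Adj (f a) (f b) ∨ f a = f b) (γ : G.Walk u v) :
    ∃ γ' : H.Walk (f u) (f v), γ'.length ≤ γ.length := by
  induction γ with
  | nil => exact ⟨.nil, le_rfl⟩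
  | @cons u' x' v' h γ ih =>
    obtain ⟨γ', hγ'⟩ := ih
    rcases hf _ _ h with h' | h'
    · exact ⟨.cons h' γ', by simp only [Walk.length_cons]; omega⟩
    · exact ⟨γ'.copy h'.symm rfl, by simp only [Walk.length_copy, Walk.length_cons]; omega⟩

lemma Connected.dist_le_of_adj_or_eq (hG : G.Connected) (f : V → W)
    (hf : ∀ a b, G.Adj a b → H.Adj (f a) (f b) ∨ f a = f b) (u v : V) :
    H.dist (f u) (f v) ≤ G.dist u v := by
  obtain ⟨γ, hγ⟩ := hG.exists_walk_length_eq_dist u v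
  obtain ⟨γ', hγ'⟩ := γ.exists_length_le_of_adj_or_eq f hf
  exact (dist_le γ').trans (hγ ▸ hγ')

lemma Connected.exists_adj_dist_add_one_eq (hG : G.Connected) (h : x ≠ z) :
    ∃ y, G.Adj x y ∧ G.dist y z + 1 = G.dist x z := by
  obtain ⟨γ, hγ⟩ := hG.exists_walk_length_eq_dist x z
  cases γ with
  | nil => exact absurd rfl h
  | @cons _ y _ hxy γ =>
    refine ⟨y, hxy, le_antisymm ?_ ?_⟩
    · have := dist_le γ
      simp only [Walk.length_cons] at hγ
      omega
    · have := hG.dist_triangle (u := x) (v := y) (w := z)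
      rw [dist_eq_one_iff_adj.mpr hxy] at this
      omega

/-- The neighbour of `x` on a shortest path from `x` to `z` (a junk value when `x = z`). -/
noncomputable def stepToward (G : SimpleGraph V) (x z : V) : V :=
  haveI : Nonempty V := ⟨x⟩
  Classical.epsilon fun y => G.Adj x y ∧ G.dist y z + 1 = G.dist x z

lemma Connected.stepToward_spec (hG : G.Connected) (h : x ≠ z) :
    G.Adj x (G.stepToward x z) ∧ G.dist (G.stepToward x z) z + 1 = G.dist x z :=
  Classical.epsilon_spec (hG.exists_adj_dist_add_one_eq h)

lemma Reachable.reachable_deleteEdges_of_dist_lt (hr : G.Reachable u p)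
    (h : G.dist u p < G.dist u q) : (G.deleteEdges {s(p, q)}).Reachable u p := by
  classical
  obtain ⟨γ, hγ⟩ := hr.exists_walk_length_eq_dist
  refine ⟨γ.toDeleteEdge _ fun he => ?_⟩
  have hq := γ.snd_mem_support_of_mem_edges he
  have hqp : q ≠ p := by rintro rfl; omega
  have := dist_le (γ.takeUntil q hq)
  have := Walk.length_takeUntil_lt_length hq hqp
  omega

namespace IsTree

theorem eq_of_adj_of_dist_lt (hG : G.IsTree) (hpq : G.Adj p q) (hab : G.Adj a b)
    (ha : G.dist a p < G.dist a q) (hb : ¬ G.dist b p < G.dist b q) : a = p ∧ b = q := by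
  have hb' : G.dist b q < G.dist b p := by
    have := hG.dist_ne_of_adj b hpq
    omega
  by_contra hne
  refine isAcyclic_iff_forall_adj_isBridge.mp hG.isAcyclic hpq ?_
  have hab' : (G.deleteEdges {s(p, q)}).Adj a b := by
    refine deleteEdges_adj.mpr ⟨hab, fun h => ?_⟩
    rcases Sym2.eq_iff.mp h with h | ⟨rfl, rfl⟩
    · exact hne h
    · simp at ha
  exact (((hG.connected a p).reachable_deleteEdges_of_dist_lt ha).symm.trans hab'.reachable).trans
    (by simpa [Sym2.eq_swap] using (hG.connected b q).reachable_deleteEdges_of_dist_lt hb')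

theorem dist_eq_add_of_adj (hG : G.IsTree) (hpq : G.Adj p q) (hu : G.dist u p < G.dist u q)
    (hv : ¬ G.dist v p < G.dist v q) : G.dist u v = G.dist u p + 1 + G.dist q v :=
  hG.connected.dist_eq_add_of_cut (P := fun w => G.dist w p < G.dist w q) hpq
    (fun _ _ hab => hG.eq_of_adj_of_dist_lt hpq hab) hu hv

theorem eq_stepToward (hG : G.IsTree) (hxy : G.Adj x y) (h : G.dist y z + 1 = G.dist x z) :
    y = G.stepToward x z := by
  have hxz : x ≠ z := by rintro rfl; simp at h
  obtain ⟨hs, hsz⟩ := hG.connected.stepToward_spec hxz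
  by_contra hne
  have hyx : G.dist y x = 1 := dist_eq_one_iff_adj.mpr hxy.symm
  have hys : G.dist y x < G.dist y (G.stepToward x z) := by
    have := hG.dist_ne_of_adj y hs
    have := hG.connected.pos_dist_of_ne hne
    omega
  have := hG.dist_eq_add_of_adj hs hys (v := z)
    (by rw [dist_comm (u := z), dist_comm (u := z)]; omega)
  omega

theorem stepToward_eq_of_adj (hG : G.IsTree) (h : G.Adj x z) : G.stepToward x z = z :=
  (hG.eq_stepToward h (by simp [dist_eq_one_iff_adj.mpr h])).symm

theorem stepToward_eq_of_dist_eq_add_one (hG : G.IsTree) (hzz' : G.Adj z z') (hxz : x ≠ z)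
    (h : G.dist x z' = G.dist x z + 1) : G.stepToward x z' = G.stepToward x z := by
  obtain ⟨hs, hsz⟩ := hG.connected.stepToward_spec hxz
  refine (hG.eq_stepToward hs ?_).symm
  have := hG.connected.dist_triangle (u := G.stepToward x z) (v := z) (w := z')
  have := hG.connected.dist_triangle (u := x) (v := G.stepToward x z) (w := z')
  have := dist_eq_one_iff_adj.mpr hzz'
  have := dist_eq_one_iff_adj.mpr hs
  omega

theorem stepToward_eq_of_adj_of_ne (hG : G.IsTree) (hzz' : G.Adj z z') (hxz : x ≠ z)
    (hxz' : x ≠ z') : G.stepToward x z = G.stepToward x z' := by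
  rcases hG.dist_eq_dist_add_one_of_adj x hzz' with h | h
  · exact hG.stepToward_eq_of_dist_eq_add_one hzz'.symm hxz' h
  · exact (hG.stepToward_eq_of_dist_eq_add_one hzz' hxz h).symm

theorem dist_lt_or_dist_lt (hG : G.IsTree) (hq : G.Adj c q) (hq' : G.Adj c q') (hne : q ≠ q')
    (w : V) : G.dist w c < G.dist w q ∨ G.dist w c < G.dist w q' := by
  by_contra! h
  have h₁ := hG.dist_eq_dist_add_one_of_adj w hq
  have h₂ := hG.dist_eq_dist_add_one_of_adj w hq'
  refine hne ((hG.eq_stepToward (z := w) hq ?_).trans (hG.eq_stepToward hq' ?_).symm) <;>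
    rw [dist_comm (u := c), dist_comm (v := w)] <;> omega

theorem dist_add_dist_eq_or (hG : G.IsTree) (h : G.dist a c + G.dist c b = G.dist a b) (w : V) :
    G.dist w c + G.dist c a = G.dist w a ∨ G.dist w c + G.dist c b = G.dist w b := by
  by_cases hca : c = a
  · simp [hca]
  by_cases hcb : c = b
  · simp [hcb]
  obtain ⟨ha, hda⟩ := hG.connected.stepToward_spec hca
  obtain ⟨hb, hdb⟩ := hG.connected.stepToward_spec hcb
  have hne : G.stepToward c a ≠ G.stepToward c b := fun he => by
    have := hG.connected.dist_triangle (u := a) (v := G.stepToward c b) (w := b)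
    have := dist_comm (G := G) (u := a) (v := c)
    have := dist_comm (G := G) (u := a) (v := G.stepToward c b)
    rw [he] at hda
    omega
  rcases hG.dist_lt_or_dist_lt ha hb hne w with hw | hw
  · left
    have := hG.dist_eq_add_of_adj ha hw (v := a)
      (by rw [dist_comm (u := a), dist_comm (u := a)]; omega)
    omega
  · right
    have := hG.dist_eq_add_of_adj hb hw (v := b)
      (by rw [dist_comm (u := b), dist_comm (u := b)]; omega)
    omega

end IsTree

end SimpleGraph

section Eccentricity

variable {V : Type*} {G : SimpleGraph V}

lemma dist_le_eccent [Finite V] (x y : V) : G.dist x y ≤ eccent G x :=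
  le_ciSup (Set.finite_range _).bddAbove y

lemma eccent_le_graphDiam [Finite V] (x : V) : eccent G x ≤ graphDiam G :=
  le_ciSup (Set.finite_range _).bddAbove x

lemma dist_le_graphDiam [Finite V] (x y : V) : G.dist x y ≤ graphDiam G :=
  (dist_le_eccent x y).trans (eccent_le_graphDiam x)

lemma graphDiam_le [Nonempty V] {n : ℕ} (h : ∀ x y, G.dist x y ≤ n) : graphDiam G ≤ n :=
  ciSup_le fun x => ciSup_le (h x)

lemma exists_dist_eq_eccent [Finite V] (x : V) : ∃ y, G.dist x y = eccent G x :=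
  haveI : Nonempty V := ⟨x⟩
  exists_eq_ciSup_of_finite

lemma exists_dist_eq_graphDiam [Finite V] [Nonempty V] : ∃ x y, G.dist x y = graphDiam G := by
  obtain ⟨x, hx⟩ := exists_eq_ciSup_of_finite (f := eccent G)
  obtain ⟨y, hy⟩ := exists_dist_eq_eccent (G := G) x
  exact ⟨x, y, hy.trans hx⟩

theorem two_le_graphDiam [Fintype V] (hG : G.IsTree) (hcard : 3 ≤ Fintype.card V) :
    2 ≤ graphDiam G := by
  by_contra! h
  obtain ⟨s, -, hs⟩ := Finset.exists_subset_card_eq (s := Finset.univ) hcard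
  refine hG.isAcyclic.cliqueFree le_rfl s ⟨fun x _ y _ hxy => ?_, hs⟩
  have := dist_le_graphDiam (G := G) x y
  have := hG.connected.pos_dist_of_ne hxy
  exact SimpleGraph.dist_eq_one_iff_adj.mp (by omega)

theorem eccent_lt_graphDiam_of_adj_of_adj [Finite V] (hG : G.IsTree) {c q q' : V}
    (hq : G.Adj c q) (hq' : G.Adj c q') (hne : q ≠ q') : eccent G c < graphDiam G := by
  obtain ⟨w, hw⟩ := exists_dist_eq_eccent (G := G) c
  rw [← hw, SimpleGraph.dist_comm]
  rcases hG.dist_lt_or_dist_lt hq hq' hne w with h | h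
  · exact h.trans_le (dist_le_graphDiam w q)
  · exact h.trans_le (dist_le_graphDiam w q')

theorem eccent_stepToward_lt_graphDiam [Finite V] (hG : G.IsTree) {x z : V}
    (h : 2 ≤ G.dist x z) : eccent G (G.stepToward x z) < graphDiam G := by
  have hxz : x ≠ z := by rintro rfl; simp at h
  obtain ⟨hp, hpz⟩ := hG.connected.stepToward_spec hxz
  have hpz' : G.stepToward x z ≠ z := by
    rintro h'
    rw [h', SimpleGraph.dist_self] at hpz
    omega
  obtain ⟨hr, hrz⟩ := hG.connected.stepToward_spec hpz'
  exact eccent_lt_graphDiam_of_adj_of_adj hG hp.symm hr fun he => by rw [← he] at hrz; omega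

theorem graphRadius_eq_of_isTree [Finite V] (hG : G.IsTree) :
    graphRadius G = (graphDiam G + 1) / 2 := by
  have := hG.connected.nonempty
  obtain ⟨a, b, hab⟩ := exists_dist_eq_graphDiam (G := G)
  refine le_antisymm ?_ (le_ciInf fun v => ?_)
  · obtain ⟨γ, hγ⟩ := hG.connected.exists_walk_length_eq_dist a b
    set m := (graphDiam G + 1) / 2
    set c := γ.getVert m
    have hac : G.dist a c ≤ m := (SimpleGraph.dist_le (γ.take m)).trans (by simp)
    have hcb : G.dist c b ≤ graphDiam G - m :=
      (SimpleGraph.dist_le (γ.drop m)).trans (by simp [hγ, hab])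
    have := hG.connected.dist_triangle (u := a) (v := c) (w := b)
    refine (ciInf_le (OrderBot.bddBelow _) c).trans (ciSup_le fun w => ?_)
    have := dist_le_graphDiam (G := G) w a
    have := dist_le_graphDiam (G := G) w b
    have := SimpleGraph.dist_comm (G := G) (u := c) (v := a)
    have := SimpleGraph.dist_comm (G := G) (u := c) (v := w)
    rcases hG.dist_add_dist_eq_or (a := a) (b := b) (c := c) (by omega) w with h | h <;> omega
  · have := hG.connected.dist_triangle (u := a) (v := v) (w := b)
    have := dist_le_eccent (G := G) v a
    have := dist_le_eccent (G := G) v b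
    have := SimpleGraph.dist_comm (G := G) (u := a) (v := v)
    omega

end Eccentricity

lemma two_pow_succ_sub_one (t : ℕ) : 2 ^ (t + 1) - 1 = 2 * (2 ^ t - 1) + 1 := by
  have := Nat.one_le_two_pow (n := t)
  rw [pow_succ]
  omega

lemma two_pow_succ_sub_succ_sub_one (t : ℕ) :
    2 ^ (t + 1) - (t + 1) - 1 = (2 ^ t - t - 1) + (2 ^ t - 1) := by
  have := Nat.lt_two_pow_self (n := t)
  rw [pow_succ]
  omega

lemma exists_two_pow_eq_add (t : ℕ) : ∃ c, 2 ^ t = c + t + 1 :=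
  ⟨2 ^ t - t - 1, by have := Nat.lt_two_pow_self (n := t); omega⟩

/-- The diameter of `S(T,t)` when `T` is a tree of diameter `D ≥ 2`. -/
def sierpinskiDiam (D t : ℕ) : ℕ := (3 * 2 ^ t - 2 * t - 3) * D - 4 * (2 ^ t - t - 1)

lemma sierpinskiDiam_succ {D : ℕ} (hD : 2 ≤ D) (t : ℕ) :
    sierpinskiDiam D (t + 1) = 2 * ((2 ^ t - 1) * (D - 1) + (2 ^ t - t - 1) * (D - 2)) + 1 +
      (2 ^ (t + 1) - 1) * (D - 1) := by
  obtain ⟨c, hc⟩ := exists_two_pow_eq_add t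
  obtain ⟨d, rfl⟩ : ∃ d, D = d + 2 := ⟨D - 2, by omega⟩
  rw [sierpinskiDiam, pow_succ, hc,
    show 3 * ((c + t + 1) * 2) - 2 * (t + 1) - 3 = 6 * c + 4 * t + 1 by omega,
    show (c + t + 1) * 2 - (t + 1) - 1 = 2 * c + t by omega, show c + t + 1 - 1 = c + t by omega,
    show c + t + 1 - t - 1 = c by omega, show (c + t + 1) * 2 - 1 = 2 * c + 2 * t + 1 by omega]
  refine Nat.sub_eq_of_eq_add ?_
  simp only [Nat.add_sub_cancel, show d + 2 - 1 = d + 1 by omega]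
  ring

lemma sierpinskiDiam_le_succ {D : ℕ} (hD : 2 ≤ D) (t : ℕ) :
    sierpinskiDiam D t ≤ sierpinskiDiam D (t + 1) := by
  obtain ⟨c, hc⟩ := exists_two_pow_eq_add t
  obtain ⟨d, rfl⟩ : ∃ d, D = d + 2 := ⟨D - 2, by omega⟩
  rw [sierpinskiDiam_succ hD, sierpinskiDiam, pow_succ, hc,
    show 3 * (c + t + 1) - 2 * t - 3 = 3 * c + t by omega, show c + t + 1 - t - 1 = c by omega,
    show c + t + 1 - 1 = c + t by omega, show (c + t + 1) * 2 - 1 = 2 * c + 2 * t + 1 by omega,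
    Nat.add_sub_cancel, show d + 2 - 1 = d + 1 by omega]
  refine Nat.sub_le_of_le_add ?_
  nlinarith

/-- For `t ≥ 1` the coefficient `3·2^t − 2t − 3` is odd, so `sierpinskiDiam D t` has the parity
of `D`. -/
lemma two_mul_sierpinskiDiam_add_one_div_two {D t : ℕ} (hD : 2 ≤ D) (ht : 1 ≤ t) :
    (Even D → 2 * ((sierpinskiDiam D t + 1) / 2) =
      (3 * 2 ^ t - 2 * t - 3) * D - 4 * (2 ^ t - t - 1)) ∧
    (Odd D → 2 * ((sierpinskiDiam D t + 1) / 2) =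
      (3 * 2 ^ t - 2 * t - 3) * D + 4 * t + 5 - 2 ^ (t + 2)) := by
  obtain ⟨s, rfl⟩ : ∃ s, t = s + 1 := ⟨t - 1, by omega⟩
  obtain ⟨c, hc⟩ := exists_two_pow_eq_add s
  rw [sierpinskiDiam, show 2 ^ (s + 1 + 2) = 8 * 2 ^ s by ring, pow_succ, hc,
    show 3 * ((c + s + 1) * 2) - 2 * (s + 1) - 3 = 6 * c + 4 * s + 1 by omega,
    show (c + s + 1) * 2 - (s + 1) - 1 = 2 * c + s by omega]
  constructor
  · rintro ⟨m, rfl⟩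
    rw [show (6 * c + 4 * s + 1) * (m + m) = 2 * ((6 * c + 4 * s + 1) * m) by ring]
    omega
  · rintro ⟨m, rfl⟩
    have := Nat.le_mul_of_pos_right (6 * c + 4 * s + 1) (show 0 < m by omega)
    rw [show (6 * c + 4 * s + 1) * (2 * m + 1) = 2 * ((6 * c + 4 * s + 1) * m) + (6 * c + 4 * s + 1)
      by ring]
    omega

namespace SierpinskiGraph

variable {V : Type*} {T : SimpleGraph V} {t : ℕ} {x y : V}

local notation "𝕊" => SierpinskiGraph T

lemma adj_succ_iff {u v : Fin (t + 1) → V} : (𝕊 (t + 1)).Adj u v ↔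
    (T.Adj (u 0) (v 0) ∧
        u = Fin.cons (u 0) (fun _ => v 0) ∧ v = Fin.cons (v 0) (fun _ => u 0)) ∨
      (u 0 = v 0 ∧ (𝕊 t).Adj (Fin.tail u) (Fin.tail v)) := by
  constructor
  · rintro ⟨i, h1, h2, h3⟩
    rcases Fin.eq_zero_or_eq_succ i with rfl | ⟨j, rfl⟩
    · refine Or.inl ⟨h1, funext fun j => ?_, funext fun j => ?_⟩ <;> cases j using Fin.cases
      all_goals simp [(h3 _ (Fin.succ_pos _)).1, (h3 _ (Fin.succ_pos _)).2]
    · exact Or.inr ⟨h2 0 (Fin.succ_pos j), j, h1,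
        fun k hk => h2 k.succ (Fin.succ_lt_succ_iff.mpr hk),
        fun k hk => h3 k.succ (Fin.succ_lt_succ_iff.mpr hk)⟩
  · rintro (⟨h1, hu, hv⟩ | ⟨h0, j, h1, h2, h3⟩)
    · refine ⟨0, h1, fun j hj => absurd hj (Fin.not_lt_zero j), fun j hj => ?_⟩
      obtain ⟨k, rfl⟩ := Fin.exists_succ_eq.mpr (Fin.pos_iff_ne_zero.mp hj)
      exact ⟨by rw [hu]; simp, by rw [hv]; simp⟩
    · refine ⟨j.succ, h1, fun k hk => ?_, fun k hk => ?_⟩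
      · cases k using Fin.cases with
        | zero => exact h0
        | succ k => exact h2 k (Fin.succ_lt_succ_iff.mp hk)
      · obtain ⟨k, rfl⟩ :=
          Fin.exists_succ_eq.mpr (Fin.pos_iff_ne_zero.mp ((Fin.succ_pos j).trans hk))
        exact h3 k (Fin.succ_lt_succ_iff.mp hk)

lemma adj_cons_const (h : T.Adj x y) :
    (𝕊 (t + 1)).Adj (Fin.cons x fun _ => y) (Fin.cons y fun _ => x) :=
  adj_succ_iff.mpr (Or.inl ⟨by simpa using h, by simp, by simp⟩)

lemma adj_cons {a b : Fin t → V} (h : (𝕊 t).Adj a b) :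
    (𝕊 (t + 1)).Adj (Fin.cons x a) (Fin.cons x b) :=
  adj_succ_iff.mpr (Or.inr ⟨rfl, by simpa using h⟩)

def consHom (x : V) : 𝕊 t →g 𝕊 (t + 1) := ⟨fun a => Fin.cons x a, adj_cons⟩

theorem connected (hT : T.Connected) (t : ℕ) : (𝕊 t).Connected := by
  induction t with
  | zero => exact SimpleGraph.Connected.of_subsingleton
  | succ t ih =>
    have := hT.nonempty
    have hcopy (x : V) (a b : Fin t → V) :
        (𝕊 (t + 1)).Reachable (Fin.cons x a) (Fin.cons x b) :=
      (ih a b).map (consHom x)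
    have hwalk {x y : V} (γ : T.Walk x y) (a b : Fin t → V) :
        (𝕊 (t + 1)).Reachable (Fin.cons x a) (Fin.cons y b) := by
      induction γ generalizing a with
      | nil => exact hcopy _ a b
      | cons h γ ih => exact ((hcopy _ a _).trans (adj_cons_const h).reachable).trans (ih _)
    refine .mk fun u v => ?_
    rw [← Fin.cons_self_tail u, ← Fin.cons_self_tail v]
    exact hwalk (hT.preconnected (u 0) (v 0)).some _ _

open Classical in
/-- The retraction of `S(T,t+1)` onto its copy `x S(T,t)`: a copy `z S(T,t)` with `z ≠ x` lies
beyond the neighbour `y` of `x` towards `z` and is collapsed onto the corner `y^t`. -/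
noncomputable def retraction (T : SimpleGraph V) (x : V) (w : Fin (t + 1) → V) : Fin t → V :=
  if w 0 = x then Fin.tail w else fun _ => T.stepToward x (w 0)

lemma retraction_cons (a : Fin t → V) : retraction T x (Fin.cons x a) = a := by
  simp [retraction]

lemma adj_retraction (hT : T.IsTree) (x : V) {u v : Fin (t + 1) → V}
    (h : (𝕊 (t + 1)).Adj u v) :
    (u 0 = x ∧ v 0 = x ∧ (𝕊 t).Adj (Fin.tail u) (Fin.tail v)) ∨
      retraction T x u = retraction T x v := by
  rcases adj_succ_iff.mp h with ⟨h1, hu, hv⟩ | ⟨h0, h2⟩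
  · right
    have hu' : Fin.tail u = fun _ => v 0 := by rw [hu]; rfl
    have hv' : Fin.tail v = fun _ => u 0 := by rw [hv]; rfl
    by_cases hux : u 0 = x
    · have hvx : v 0 ≠ x := fun h => h1.ne (hux.trans h.symm)
      rw [retraction, if_pos hux, retraction, if_neg hvx, hT.stepToward_eq_of_adj (hux ▸ h1), hu']
    by_cases hvx : v 0 = x
    · rw [retraction, if_neg hux, retraction, if_pos hvx,
        hT.stepToward_eq_of_adj (hvx ▸ h1.symm), hv']
    · rw [retraction, if_neg hux, retraction, if_neg hvx,
        hT.stepToward_eq_of_adj_of_ne h1 (Ne.symm hux) (Ne.symm hvx)]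
  · by_cases hux : u 0 = x
    · exact Or.inl ⟨hux, h0 ▸ hux, h2⟩
    · right
      rw [retraction, if_neg hux, retraction, if_neg (h0 ▸ hux), h0]

theorem dist_cons_cons (hT : T.IsTree) (x : V) (a b : Fin t → V) :
    (𝕊 (t + 1)).dist (Fin.cons x a) (Fin.cons x b) = (𝕊 t).dist a b := by
  refine le_antisymm ((connected hT.connected t).dist_le_of_adj_or_eq (consHom x)
    (fun _ _ h => Or.inl ((consHom x).map_adj h)) a b) ?_
  have hf (u v : Fin (t + 1) → V) (h : (𝕊 (t + 1)).Adj u v) :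
      (𝕊 t).Adj (retraction T x u) (retraction T x v) ∨
        retraction T x u = retraction T x v := by
    rcases adj_retraction hT x h with ⟨hu, hv, h'⟩ | h'
    · left
      simpa [retraction, hu, hv] using h'
    · exact Or.inr h'
  simpa [retraction_cons] using
    (connected hT.connected (t + 1)).dist_le_of_adj_or_eq _ hf (Fin.cons x a) (Fin.cons x b)

theorem dist_eq_dist_tail (hT : T.IsTree) {u v : Fin (t + 1) → V} (h : u 0 = v 0) :
    (𝕊 (t + 1)).dist u v = (𝕊 t).dist (Fin.tail u) (Fin.tail v) := by
  conv_lhs => rw [← Fin.cons_self_tail u, ← Fin.cons_self_tail v, h]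
  exact dist_cons_cons hT _ _ _

lemma eq_of_adj_of_dist_lt (hT : T.IsTree) (hxy : T.Adj x y) {a b : Fin (t + 1) → V}
    (hab : (𝕊 (t + 1)).Adj a b) (ha : T.dist (a 0) x < T.dist (a 0) y)
    (hb : ¬ T.dist (b 0) x < T.dist (b 0) y) :
    a = Fin.cons x (fun _ => y) ∧ b = Fin.cons y (fun _ => x) := by
  rcases adj_succ_iff.mp hab with ⟨h1, hu, hv⟩ | ⟨h0, -⟩
  · obtain ⟨ha0, hb0⟩ := hT.eq_of_adj_of_dist_lt hxy h1 ha hb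
    rw [ha0, hb0] at hu hv
    exact ⟨hu, hv⟩
  · exact absurd (h0 ▸ ha) hb

theorem dist_eq_add_of_adj (hT : T.IsTree) (hxy : T.Adj x y) {u v : Fin (t + 1) → V}
    (hu : T.dist (u 0) x < T.dist (u 0) y) (hv : ¬ T.dist (v 0) x < T.dist (v 0) y) :
    (𝕊 (t + 1)).dist u v =
      (𝕊 (t + 1)).dist u (Fin.cons x fun _ => y) + 1 +
        (𝕊 (t + 1)).dist (Fin.cons y fun _ => x) v :=
  (connected hT.connected _).dist_eq_add_of_cut (P := fun w => T.dist (w 0) x < T.dist (w 0) y)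
    (adj_cons_const hxy) (fun _ _ hab => eq_of_adj_of_dist_lt hT hxy hab) hu hv

lemma isBridge_cons_const (hT : T.IsTree) (hxy : T.Adj x y) :
    (𝕊 (t + 1)).IsBridge s(Fin.cons x fun _ => y, Fin.cons y fun _ => x) := by
  rw [SimpleGraph.isBridge_iff]
  rintro ⟨γ⟩
  obtain ⟨a, b, hab, ha, hb, -⟩ := γ.exists_adj_cross
    (P := fun w => T.dist (w 0) x < T.dist (w 0) y)
    (by simpa using hT.connected.pos_dist_of_ne hxy.ne) (by simp)
  rw [SimpleGraph.deleteEdges_adj] at hab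
  obtain ⟨rfl, rfl⟩ := eq_of_adj_of_dist_lt hT hxy hab.1 ha hb
  exact hab.2 rfl

lemma isBridge_cons (hT : T.IsTree) {a b : Fin t → V} (h : (𝕊 t).IsBridge s(a, b)) :
    (𝕊 (t + 1)).IsBridge s(Fin.cons x a, Fin.cons x b) := by
  rw [SimpleGraph.isBridge_iff] at h ⊢
  rintro ⟨γ⟩
  have hf (u v : Fin (t + 1) → V)
      (huv : ((𝕊 (t + 1)).deleteEdges {s(Fin.cons x a, Fin.cons x b)}).Adj u v) :
      ((𝕊 t).deleteEdges {s(a, b)}).Adj (retraction T x u) (retraction T x v) ∨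
        retraction T x u = retraction T x v := by
    rw [SimpleGraph.deleteEdges_adj] at huv
    rcases adj_retraction hT x huv.1 with ⟨hu, hv, h'⟩ | h'
    · obtain ⟨u, rfl⟩ : ∃ u', u = Fin.cons x u' :=
        ⟨Fin.tail u, by rw [← hu, Fin.cons_self_tail]⟩
      obtain ⟨v, rfl⟩ : ∃ v', v = Fin.cons x v' :=
        ⟨Fin.tail v, by rw [← hv, Fin.cons_self_tail]⟩
      refine Or.inl (SimpleGraph.deleteEdges_adj.mpr
        ⟨by simpa [retraction_cons] using h', fun he => huv.2 ?_⟩)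
      simp only [retraction_cons, Set.mem_singleton_iff, Sym2.eq_iff] at he ⊢
      rcases he with ⟨rfl, rfl⟩ | ⟨rfl, rfl⟩ <;> simp
    · exact Or.inr h'
  obtain ⟨γ', -⟩ := γ.exists_length_le_of_adj_or_eq _ hf
  exact h (by simpa [retraction_cons] using γ'.reachable)

theorem isAcyclic (hT : T.IsTree) (t : ℕ) : (𝕊 t).IsAcyclic := by
  induction t with
  | zero => exact .of_subsingleton
  | succ t ih =>
    refine SimpleGraph.isAcyclic_iff_forall_adj_isBridge.mpr fun u v huv => ?_
    rcases adj_succ_iff.mp huv with ⟨h1, hu, hv⟩ | ⟨h0, h2⟩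
    · have := isBridge_cons_const hT (t := t) h1
      rwa [← hu, ← hv] at this
    · have := isBridge_cons hT (x := u 0) (SimpleGraph.isAcyclic_iff_forall_adj_isBridge.mp ih h2)
      rwa [Fin.cons_self_tail, h0, Fin.cons_self_tail] at this

theorem isTree (hT : T.IsTree) (t : ℕ) : (𝕊 t).IsTree :=
  ⟨connected hT.connected t, isAcyclic hT t⟩

theorem dist_eq_dist_stepToward_add (hT : T.IsTree) {u v : Fin (t + 1) → V} (h : u 0 ≠ v 0) :
    (𝕊 (t + 1)).dist u v = (𝕊 t).dist (Fin.tail u) (fun _ => T.stepToward (u 0) (v 0)) + 1 +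
      (𝕊 (t + 1)).dist (Fin.cons (T.stepToward (u 0) (v 0)) fun _ => u 0) v := by
  obtain ⟨hp, hpv⟩ := hT.connected.stepToward_spec h
  rw [dist_eq_add_of_adj hT hp (by simpa using hT.connected.pos_dist_of_ne hp.ne)
    (by rw [SimpleGraph.dist_comm (u := v 0), SimpleGraph.dist_comm (u := v 0)]; omega),
    dist_eq_dist_tail hT (by simp), Fin.tail_cons]

/-- A shortest path from `u` to `v` leaves the copy `u 0` towards `v 0` through its corner,
crosses the `d(u 0, v 0) - 1` intermediate copies from corner to corner, and enters the copy
`v 0` through its corner facing `u 0`. The corner distances `hC` at level `t` are then obtained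
from this very formula by induction on `t` (`dist_const_const`). -/
theorem dist_eq_of_head_ne_of_dist_const_const (hT : T.IsTree)
    (hC : ∀ x y : V, (𝕊 t).dist (fun _ => x) (fun _ => y) = (2 ^ t - 1) * T.dist x y)
    {u v : Fin (t + 1) → V} (h : u 0 ≠ v 0) :
    (𝕊 (t + 1)).dist u v =
      (𝕊 t).dist (Fin.tail u) (fun _ => T.stepToward (u 0) (v 0)) + 1 +
        (2 ^ (t + 1) - 1) * (T.dist (u 0) (v 0) - 1) +
          (𝕊 t).dist (fun _ => T.stepToward (v 0) (u 0)) (Fin.tail v) := by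
  obtain ⟨k, hk⟩ := Nat.exists_eq_add_one.mpr (hT.connected.pos_dist_of_ne h)
  induction k generalizing u with
  | zero =>
    obtain ⟨hp, hpv⟩ := hT.connected.stepToward_spec h
    have hp' : T.stepToward (u 0) (v 0) = v 0 := by
      rw [← hT.connected.dist_eq_zero_iff]; omega
    rw [dist_eq_dist_stepToward_add hT h, dist_eq_dist_tail hT (by simp [hp']), hp',
      hT.stepToward_eq_of_adj (hp' ▸ hp.symm), hk]
    simp
  | succ k ih =>
    obtain ⟨hp, hpv⟩ := hT.connected.stepToward_spec h
    set p := T.stepToward (u 0) (v 0) with hpdef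
    have hpv' : p ≠ v 0 := by
      rintro hp'
      rw [hp', SimpleGraph.dist_self] at hpv
      omega
    obtain ⟨hq, hqv⟩ := hT.connected.stepToward_spec hpv'
    have hup : T.dist (u 0) (T.stepToward p (v 0)) = 2 := by
      have := hT.connected.dist_triangle (u := u 0) (v := p) (w := T.stepToward p (v 0))
      have := hT.connected.dist_triangle (u := u 0) (v := T.stepToward p (v 0)) (w := v 0)
      have := SimpleGraph.dist_eq_one_iff_adj.mpr hp
      have := SimpleGraph.dist_eq_one_iff_adj.mpr hq
      omega
    have hvu : T.stepToward (v 0) p = T.stepToward (v 0) (u 0) :=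
      (hT.stepToward_eq_of_dist_eq_add_one hp.symm hpv'.symm
        (by rw [SimpleGraph.dist_comm (u := v 0), SimpleGraph.dist_comm (u := v 0)]; omega)).symm
    rw [dist_eq_dist_stepToward_add hT h, ih (u := Fin.cons p fun _ => u 0) (by simpa using hpv')
      (by rw [Fin.cons_zero]; omega), ← hpdef]
    simp only [Fin.cons_zero, Fin.tail_cons, hC, hup, hvu, hk, two_pow_succ_sub_one,
      show T.dist p (v 0) = k + 1 by omega, Nat.add_sub_cancel]
    ring

theorem dist_const_const (hT : T.IsTree) (t : ℕ) (x y : V) :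
    (𝕊 t).dist (fun _ => x) (fun _ => y) = (2 ^ t - 1) * T.dist x y := by
  induction t generalizing x y with
  | zero => simp [Subsingleton.elim (fun _ => x : Fin 0 → V) (fun _ => y)]
  | succ t ih =>
    by_cases hxy : x = y
    · simp [hxy]
    obtain ⟨hp, -⟩ := hT.connected.stepToward_spec hxy
    obtain ⟨hq, -⟩ := hT.connected.stepToward_spec (Ne.symm hxy)
    obtain ⟨k, hk⟩ := Nat.exists_eq_add_one.mpr (hT.connected.pos_dist_of_ne hxy)
    rw [dist_eq_of_head_ne_of_dist_const_const hT ih hxy]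
    simp only [Fin.tail_def, ih, hk, SimpleGraph.dist_eq_one_iff_adj.mpr hp,
      SimpleGraph.dist_eq_one_iff_adj.mpr hq.symm, two_pow_succ_sub_one, Nat.add_sub_cancel]
    ring

theorem dist_eq_of_head_ne (hT : T.IsTree) {u v : Fin (t + 1) → V} (h : u 0 ≠ v 0) :
    (𝕊 (t + 1)).dist u v =
      (𝕊 t).dist (Fin.tail u) (fun _ => T.stepToward (u 0) (v 0)) + 1 +
        (2 ^ (t + 1) - 1) * (T.dist (u 0) (v 0) - 1) +
          (𝕊 t).dist (fun _ => T.stepToward (v 0) (u 0)) (Fin.tail v) :=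
  dist_eq_of_head_ne_of_dist_const_const hT (dist_const_const hT t) h

theorem dist_const_le [Finite V] (hT : T.IsTree) (hD : 2 ≤ graphDiam T) (t : ℕ) (y : V)
    (w : Fin t → V) :
    (𝕊 t).dist (fun _ => y) w ≤
      (2 ^ t - 1) * eccent T y + (2 ^ t - t - 1) * (graphDiam T - 2) := by
  induction t generalizing y with
  | zero => simp [Subsingleton.elim w (fun _ => y)]
  | succ t ih =>
    rw [two_pow_succ_sub_one, two_pow_succ_sub_succ_sub_one]
    by_cases h0 : y = w 0
    · rw [dist_eq_dist_tail hT h0]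
      refine (ih y (Fin.tail w)).trans ?_
      gcongr <;> omega
    obtain ⟨k, hk⟩ := Nat.exists_eq_add_one.mpr (hT.connected.pos_dist_of_ne h0)
    obtain ⟨hp, -⟩ := hT.connected.stepToward_spec h0
    have hky : k + 1 ≤ eccent T y := hk ▸ dist_le_eccent y (w 0)
    rw [dist_eq_of_head_ne hT h0]
    simp only [Fin.tail_def, dist_const_const hT t, SimpleGraph.dist_eq_one_iff_adj.mpr hp, hk,
      two_pow_succ_sub_one, Nat.add_sub_cancel]
    have hq := ih (T.stepToward (w 0) y) (Fin.tail w)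
    simp only [Fin.tail_def] at hq
    obtain ⟨D, hD⟩ := Nat.exists_eq_add_of_le' hD
    rw [hD, Nat.add_sub_cancel] at hq ⊢
    rcases Nat.eq_zero_or_pos k with rfl | hk0
    · have hqy : T.stepToward (w 0) y = y := hT.stepToward_eq_of_adj
        (SimpleGraph.dist_eq_one_iff_adj.mp (by rw [SimpleGraph.dist_comm]; exact hk))
      rw [hqy] at hq ⊢
      nlinarith
    · have hEq := eccent_stepToward_lt_graphDiam hT (x := w 0) (z := y)
        (by rw [SimpleGraph.dist_comm]; omega)
      rw [hD] at hEq
      nlinarith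

theorem dist_le_sierpinskiDiam [Finite V] (hT : T.IsTree) (hD : 2 ≤ graphDiam T) (t : ℕ)
    (u v : Fin t → V) : (𝕊 t).dist u v ≤ sierpinskiDiam (graphDiam T) t := by
  induction t with
  | zero => simp [Subsingleton.elim u v]
  | succ t ih =>
    by_cases h0 : u 0 = v 0
    · rw [dist_eq_dist_tail hT h0]
      exact (ih _ _).trans (sierpinskiDiam_le_succ hD t)
    rw [dist_eq_of_head_ne hT h0, sierpinskiDiam_succ hD, two_pow_succ_sub_one,
      SimpleGraph.dist_comm (u := Fin.tail u)]
    have hp := dist_const_le hT hD t (T.stepToward (u 0) (v 0)) (Fin.tail u)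
    have hq := dist_const_le hT hD t (T.stepToward (v 0) (u 0)) (Fin.tail v)
    have hk := dist_le_graphDiam (G := T) (u 0) (v 0)
    have hk0 := hT.connected.pos_dist_of_ne h0
    obtain ⟨D, hD⟩ := Nat.exists_eq_add_of_le' hD
    rw [hD, Nat.add_sub_cancel] at hp hq ⊢
    rw [hD] at hk
    rw [show D + 2 - 1 = D + 1 by omega]
    rcases Nat.lt_or_ge (T.dist (u 0) (v 0)) 2 with hk1 | hk2
    · have hEp := (eccent_le_graphDiam (G := T) (T.stepToward (u 0) (v 0))).trans_eq hD
      have hEq := (eccent_le_graphDiam (G := T) (T.stepToward (v 0) (u 0))).trans_eq hD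
      rw [show T.dist (u 0) (v 0) - 1 = 0 by omega]
      nlinarith
    · have hEp := (eccent_stepToward_lt_graphDiam hT hk2).trans_eq hD
      have hEq := (eccent_stepToward_lt_graphDiam hT
        (hk2.trans_eq SimpleGraph.dist_comm)).trans_eq hD
      have := Nat.mul_le_mul_left (2 * (2 ^ t - 1) + 1)
        (show T.dist (u 0) (v 0) - 1 ≤ D + 1 by omega)
      nlinarith

def alternating (x y : V) : (s : ℕ) → Fin s → V
  | 0 => Fin.elim0
  | s + 1 => Fin.cons x (alternating y x s)

theorem dist_alternating_const (hT : T.IsTree) (s : ℕ) {a b : V} (h : 2 ≤ T.dist a b) :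
    (𝕊 s).dist (alternating b a s) (fun _ => T.stepToward a b) =
      (2 ^ s - 1) * (T.dist a b - 1) + (2 ^ s - s - 1) * (T.dist a b - 2) := by
  induction s generalizing a b with
  | zero => simp [Subsingleton.elim (alternating b a 0) (fun _ => T.stepToward a b)]
  | succ s ih =>
    have hab : a ≠ b := by rintro rfl; simp at h
    obtain ⟨hp, hpb⟩ := hT.connected.stepToward_spec hab
    have hbp : b ≠ T.stepToward a b := by
      rintro hb
      rw [← hb, SimpleGraph.dist_self] at hpb
      omega
    obtain ⟨hq, -⟩ := hT.connected.stepToward_spec hbp.symm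
    have hstep : T.stepToward b (T.stepToward a b) = T.stepToward b a :=
      (hT.stepToward_eq_of_dist_eq_add_one hp.symm hbp
        (by rw [SimpleGraph.dist_comm (u := b), SimpleGraph.dist_comm (u := b)]; omega)).symm
    rw [dist_eq_of_head_ne hT (by simpa [alternating] using hbp)]
    simp only [alternating, Fin.cons_zero, Fin.tail_def, Fin.cons_succ, hstep,
      dist_const_const hT s, SimpleGraph.dist_eq_one_iff_adj.mpr hq.symm, two_pow_succ_sub_one,
      two_pow_succ_sub_succ_sub_one]
    rw [ih (h.trans_eq SimpleGraph.dist_comm), SimpleGraph.dist_comm (u := b),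
      SimpleGraph.dist_comm (u := b)]
    obtain ⟨m, hm⟩ := Nat.exists_eq_add_of_le' h
    rw [hm, show T.dist (T.stepToward a b) b = m + 1 by omega]
    simp only [Nat.add_sub_cancel, show m + 2 - 1 = m + 1 by omega, show m + 1 - 1 = m by omega]
    ring

theorem dist_alternating_alternating (hT : T.IsTree) {a b : V} (h : 2 ≤ T.dist a b) (t : ℕ) :
    (𝕊 (t + 1)).dist (alternating a b (t + 1)) (alternating b a (t + 1)) =
      sierpinskiDiam (T.dist a b) (t + 1) := by
  have hab : a ≠ b := by rintro rfl; simp at h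
  rw [dist_eq_of_head_ne hT (by simpa [alternating] using hab)]
  simp only [alternating, Fin.cons_zero, Fin.tail_cons]
  rw [dist_alternating_const hT t h, SimpleGraph.dist_comm (u := fun _ => T.stepToward b a),
    dist_alternating_const hT t (h.trans_eq SimpleGraph.dist_comm), SimpleGraph.dist_comm (u := b),
    sierpinskiDiam_succ h]
  ring

theorem graphDiam_eq [Finite V] (hT : T.IsTree) (hD : 2 ≤ graphDiam T) (t : ℕ) :
    graphDiam (𝕊 t) = sierpinskiDiam (graphDiam T) t := by
  have := hT.connected.nonempty
  refine le_antisymm (graphDiam_le (dist_le_sierpinskiDiam hT hD t)) ?_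
  cases t with
  | zero => simp [sierpinskiDiam]
  | succ t =>
    obtain ⟨a, b, hab⟩ := exists_dist_eq_graphDiam (G := T)
    rw [← hab] at hD ⊢
    exact (dist_alternating_alternating hT hD t).symm.le.trans (dist_le_graphDiam _ _)

end SierpinskiGraph

/-- for a finite tree `T` with at least three vertices and any `t ≥ 1`, the
radius of `S(T,t)` satisfies (stated with both sides doubled to stay in `ℕ`):
if `D(T)` is even, `r(S(T,t)) = ½(3·2^t − 2t − 3)·D(T) − 2(2^t − t − 1)`, and
if `D(T)` is odd, `r(S(T,t)) = ½((3·2^t − 2t − 3)·D(T) − 2^{t+2} + 4t + 5)`. -/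
theorem stmt_17 {V : Type*} [Fintype V] (T : SimpleGraph V) (hT : T.IsTree)
    (hcard : 3 ≤ Fintype.card V) (t : ℕ) (ht : 1 ≤ t) :
    (Even (graphDiam T) →
      2 * graphRadius (SierpinskiGraph T t) =
        (3 * 2 ^ t - 2 * t - 3) * graphDiam T - 4 * (2 ^ t - t - 1)) ∧
    (Odd (graphDiam T) →
      2 * graphRadius (SierpinskiGraph T t) =
        (3 * 2 ^ t - 2 * t - 3) * graphDiam T + 4 * t + 5 - 2 ^ (t + 2)) := by
  have hD := two_le_graphDiam hT hcard
  rw [graphRadius_eq_of_isTree (SierpinskiGraph.isTree hT t), SierpinskiGraph.graphDiam_eq hT hD t]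
  exact two_mul_sierpinskiDiam_add_one_div_two hD ht
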